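/- Let Γ = ℕ ∖ {1,2,3,5,7,9,11,15} and let O be the ℂ-subalgebra of ℂ[[t]] that is the image of the substitution homomorphism ℂ[[x,y]] → ℂ[[t]], x ↦ t⁴, y ↦ t⁶ + t⁷. Let Δ ⊆ ℕ satisfy 0 ∈ Δ and Δ + Γ ⊆ Δ, let 0 = α₀ < α₁ < ⋯ < α_r be the minimal generators of Δ as a Γ-module, and choose f₀, …, f_r ∈ ℂ[[t]] with ord(f_j) = α_j for each j. Suppose φ₀, …, φ_r ∈ O are such that g = Σ_j f_j φ_j is nonzero and η = ord(g) ∉ Δ. Then: α₁ = 2; 1 ∉ Δ and 3 ∉ Δ; η ∈ {7, 9, 11, 15}; and ord(f₀ φ₀) = ord(f₁ φ₁) = min over j with f_j φ_j ≠ 0 of ord(f_j φ_j). -/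

import Mathlib

/-! Every monomial `t^(4a) (t^6 + t^7)^b` satisfies the linear relations
`c₁ = c₂ = c₃ = c₅ = c₉ = 0`, `c₇ = c₆`, `c₁₁ = c₁₀`, `c₁₃ + 2 c₁₅ = 2 c₁₄` among its
coefficients `cₙ`; since they involve finitely many coefficients they pass to all of `O`, so the
orders of nonzero elements of `O` lie in `Γ`. Hence every nonzero term `f_j φ_j` has order in `Δ`,
and `η ∉ Δ` forces a cancellation: two terms `i < j` attain the minimal order `μ < η`, so
`α_i + γ = α_j + γ'` with `γ, γ' ∈ Γ`, while `α_j - α_i ∉ Γ` by minimality of the generators.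
Arithmetic in `Γ` then gives `η ∈ {7, 9, 11, 15}`, so `η - 1, η - 3 ∈ Γ` and `1, 3 ∉ Δ`. The gap
`α_j` is then neither `1` nor `3`, so `15 - α_j ∈ Γ` and `η ≠ 15`; finally `μ ≤ 10` forces
`α_i = 0` and `α_j = 2`. -/

/-- The order of a formal power series: the smallest `i` such that the coefficient
of `t^i` is nonzero (junk value `0` for the zero series). -/
noncomputable def ord (f : PowerSeries ℂ) : ℕ :=
  sInf {i : ℕ | PowerSeries.coeff i f ≠ 0}

/-- The substitution homomorphism `ℂ[[x,y]] → ℂ[[t]]`, `x ↦ t⁴`, `y ↦ t⁶ + t⁷`,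
described coefficientwise. -/
noncomputable def subst47 (P : MvPowerSeries (Fin 2) ℂ) : PowerSeries ℂ :=
  PowerSeries.mk fun n => ∑ᶠ d : Fin 2 →₀ ℕ,
    MvPowerSeries.coeff d P *
      PowerSeries.coeff n
        (((PowerSeries.X : PowerSeries ℂ) ^ 4) ^ (d 0) *
          ((PowerSeries.X : PowerSeries ℂ) ^ 6 + (PowerSeries.X : PowerSeries ℂ) ^ 7) ^ (d 1))

/-- `O = ℂ[[t⁴, t⁶+t⁷]]`, the image of the substitution homomorphism. -/
noncomputable def Oimage : Set (PowerSeries ℂ) := Set.range subst47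

open PowerSeries

lemma ord_eq_toNat_order (f : PowerSeries ℂ) : ord f = f.order.toNat := by
  rcases eq_or_ne f 0 with rfl | hf
  · simp [ord]
  refine le_antisymm (Nat.sInf_le (coeff_order hf))
    (le_csInf ⟨_, coeff_order hf⟩ fun i hi => ?_)
  by_contra! h
  exact hi (coeff_of_lt_order_toNat i h)

lemma coeff_ord_ne_zero {f : PowerSeries ℂ} (hf : f ≠ 0) : coeff (ord f) f ≠ 0 :=
  ord_eq_toNat_order f ▸ coeff_order hf

lemma ord_le_of_coeff_ne_zero {f : PowerSeries ℂ} {n : ℕ} (h : coeff n f ≠ 0) : ord f ≤ n :=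
  Nat.sInf_le h

lemma coeff_of_lt_ord {f : PowerSeries ℂ} {n : ℕ} (h : n < ord f) : coeff n f = 0 :=
  coeff_of_lt_order_toNat n (ord_eq_toNat_order f ▸ h)

lemma ord_mul {f g : PowerSeries ℂ} (hf : f ≠ 0) (hg : g ≠ 0) :
    ord (f * g) = ord f + ord g := by
  simp only [ord_eq_toNat_order, order_mul]
  exact ENat.toNat_add (order_eq_top.not.2 hf) (order_eq_top.not.2 hg)

-- the image of the monomial `x ^ a * y ^ b` under `subst47`
noncomputable def monomial47 (a b : ℕ) : PowerSeries ℂ := (X ^ 4) ^ a * (X ^ 6 + X ^ 7) ^ b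

lemma coeff_one_add_X_pow (b k : ℕ) : coeff k ((1 + X : PowerSeries ℂ) ^ b) = b.choose k := by
  have h : (((1 + Polynomial.X) ^ b : Polynomial ℂ) : PowerSeries ℂ) = (1 + X) ^ b := by
    push_cast; rfl
  rw [← h, Polynomial.coeff_coe, add_comm, Polynomial.coeff_X_add_one_pow]

lemma coeff_monomial47 (a b n : ℕ) :
    coeff n (monomial47 a b) =
      if 4 * a + 6 * b ≤ n then (b.choose (n - (4 * a + 6 * b)) : ℂ) else 0 := by
  have h : monomial47 a b = X ^ (4 * a + 6 * b) * (1 + X) ^ b := by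
    rw [monomial47, show (X ^ 6 + X ^ 7 : PowerSeries ℂ) = X ^ 6 * (1 + X) by ring, mul_pow,
      pow_add, pow_mul, pow_mul, mul_assoc]
  rw [h, coeff_X_pow_mul']
  split_ifs
  · rw [coeff_one_add_X_pow]
  · rfl

lemma coeff_monomial47_of_lt {a b n : ℕ} (h : n < 4 * a + 6 * b) :
    coeff n (monomial47 a b) = 0 := by
  rw [coeff_monomial47, if_neg (by omega)]

lemma coeff_monomial47_of_gap (a b : ℕ) {n : ℕ} (hn : n ∈ ({1, 2, 3, 5, 9} : Set ℕ)) :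
    coeff n (monomial47 a b) = 0 := by
  simp only [Set.mem_insert_iff, Set.mem_singleton_iff] at hn
  rcases le_or_gt (4 * a + 6 * b) 9 with h | h
  · have ha : a ≤ 2 := by omega
    have hb : b ≤ 1 := by omega
    interval_cases a <;> interval_cases b <;> rcases hn with rfl | rfl | rfl | rfl | rfl <;>
      norm_num [coeff_monomial47, Nat.choose]
  · exact coeff_monomial47_of_lt (by omega)

lemma coeff_seven_monomial47 (a b : ℕ) :
    coeff 7 (monomial47 a b) = coeff 6 (monomial47 a b) := by
  rcases le_or_gt (4 * a + 6 * b) 7 with h | h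
  · have ha : a ≤ 1 := by omega
    have hb : b ≤ 1 := by omega
    interval_cases a <;> interval_cases b <;> norm_num [coeff_monomial47, Nat.choose]
  · rw [coeff_monomial47_of_lt (by omega), coeff_monomial47_of_lt (by omega)]

lemma coeff_eleven_monomial47 (a b : ℕ) :
    coeff 11 (monomial47 a b) = coeff 10 (monomial47 a b) := by
  rcases le_or_gt (4 * a + 6 * b) 11 with h | h
  · have ha : a ≤ 2 := by omega
    have hb : b ≤ 1 := by omega
    interval_cases a <;> interval_cases b <;> norm_num [coeff_monomial47, Nat.choose]
  · rw [coeff_monomial47_of_lt (by omega), coeff_monomial47_of_lt (by omega)]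

lemma coeff_fifteen_monomial47 (a b : ℕ) :
    coeff 13 (monomial47 a b) + 2 * coeff 15 (monomial47 a b) =
      2 * coeff 14 (monomial47 a b) := by
  rcases le_or_gt (4 * a + 6 * b) 15 with h | h
  · have ha : a ≤ 3 := by omega
    have hb : b ≤ 2 := by omega
    interval_cases a <;> interval_cases b <;> norm_num [coeff_monomial47, Nat.choose]
  · rw [coeff_monomial47_of_lt (by omega : 13 < 4 * a + 6 * b),
      coeff_monomial47_of_lt (by omega : 14 < 4 * a + 6 * b),
      coeff_monomial47_of_lt (by omega : 15 < 4 * a + 6 * b)]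
    ring

lemma coeff_subst47_eq_coeff_sum (P : MvPowerSeries (Fin 2) ℂ) {n N : ℕ} (hn : n ≤ N) :
    coeff n (subst47 P) = coeff n (∑ d ∈ Finset.Iic (Finsupp.equivFunOnFinite.symm fun _ => N),
      MvPowerSeries.coeff d P • monomial47 (d 0) (d 1)) := by
  rw [subst47, coeff_mk, map_sum]
  simp only [map_smul, smul_eq_mul]
  change ∑ᶠ d, MvPowerSeries.coeff d P * coeff n (monomial47 (d 0) (d 1)) = _
  refine finsum_eq_sum_of_support_subset _ fun d hd => ?_
  have hd' : 4 * d 0 + 6 * d 1 ≤ n := by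
    by_contra! h
    exact hd (by simp only [coeff_monomial47_of_lt h, mul_zero])
  simp [Finsupp.le_def, Fin.forall_fin_two]
  omega

lemma map_subst47_eq_zero (L : PowerSeries ℂ →ₗ[ℂ] ℂ) (N : ℕ)
    (hL : ∀ φ, (∀ n ≤ N, coeff n φ = 0) → L φ = 0) (hmono : ∀ a b, L (monomial47 a b) = 0)
    (P : MvPowerSeries (Fin 2) ℂ) : L (subst47 P) = 0 := by
  set S := ∑ d ∈ Finset.Iic (Finsupp.equivFunOnFinite.symm fun _ => N),
    MvPowerSeries.coeff d P • monomial47 (d 0) (d 1)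
  have h : L (subst47 P - S) = 0 :=
    hL _ fun n hn => by rw [map_sub, coeff_subst47_eq_coeff_sum P hn, sub_self]
  rw [map_sub, sub_eq_zero] at h
  simp [h, S, hmono]

lemma coeff_subst47_of_gap (P : MvPowerSeries (Fin 2) ℂ) {n : ℕ}
    (hn : n ∈ ({1, 2, 3, 5, 9} : Set ℕ)) : coeff n (subst47 P) = 0 :=
  map_subst47_eq_zero (coeff n) n (fun _ h => h n le_rfl)
    (fun a b => coeff_monomial47_of_gap a b hn) P

lemma coeff_seven_subst47 (P : MvPowerSeries (Fin 2) ℂ) :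
    coeff 7 (subst47 P) = coeff 6 (subst47 P) := by
  have h := map_subst47_eq_zero (coeff 7 - coeff 6) 7
    (fun φ h => by simp [h 7 le_rfl, h 6 (by norm_num)])
    (fun a b => by simp [coeff_seven_monomial47]) P
  rwa [LinearMap.sub_apply, sub_eq_zero] at h

lemma coeff_eleven_subst47 (P : MvPowerSeries (Fin 2) ℂ) :
    coeff 11 (subst47 P) = coeff 10 (subst47 P) := by
  have h := map_subst47_eq_zero (coeff 11 - coeff 10) 11
    (fun φ h => by simp [h 11 le_rfl, h 10 (by norm_num)])
    (fun a b => by simp [coeff_eleven_monomial47]) P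
  rwa [LinearMap.sub_apply, sub_eq_zero] at h

lemma coeff_fifteen_subst47 (P : MvPowerSeries (Fin 2) ℂ) :
    coeff 13 (subst47 P) + 2 * coeff 15 (subst47 P) = 2 * coeff 14 (subst47 P) := by
  have h := map_subst47_eq_zero (coeff 13 + 2 • coeff 15 - 2 • coeff 14) 15
    (fun φ h => by simp [h 13 (by norm_num), h 14 (by norm_num), h 15 le_rfl])
    (fun a b => by simp [← coeff_fifteen_monomial47 a b])
  simpa [sub_eq_zero] using h P

lemma ord_mem_of_mem_Oimage {φ : PowerSeries ℂ} (hφ : φ ∈ Oimage) (h0 : φ ≠ 0) :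
    ord φ ∈ ({1, 2, 3, 5, 7, 9, 11, 15} : Set ℕ)ᶜ := by
  obtain ⟨P, rfl⟩ := hφ
  have hlow : ∀ n < ord (subst47 P), coeff n (subst47 P) = 0 := fun n => coeff_of_lt_ord
  intro hmem
  apply coeff_ord_ne_zero h0
  by_cases hgap : ord (subst47 P) ∈ ({1, 2, 3, 5, 9} : Set ℕ)
  · exact coeff_subst47_of_gap P hgap
  obtain h | h | h : ord (subst47 P) = 7 ∨ ord (subst47 P) = 11 ∨ ord (subst47 P) = 15 := by
    simp only [Set.mem_insert_iff, Set.mem_singleton_iff] at hmem hgap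
    omega
  all_goals rw [h]
  · rw [coeff_seven_subst47, hlow 6 (by omega)]
  · rw [coeff_eleven_subst47, hlow 10 (by omega)]
  · linear_combination (coeff_fifteen_subst47 P - hlow 13 (by omega) + 2 * hlow 14 (by omega)) / 2

lemma sub_notMem_of_minimal_generators {Γ Δ : Set ℕ} {ι : Type*} {α : ι → ℕ}
    (hadd : ∀ a ∈ Γ, ∀ b ∈ Γ, a + b ∈ Γ) (hgen : Δ = ⋃ j, ((α j + ·) '' Γ))
    (hmin : ∀ s : Set ℕ, s ⊆ Set.range α → Δ = ⋃ a ∈ s, ((a + ·) '' Γ) → s = Set.range α)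
    {i j : ι} (hlt : α i < α j) : α j - α i ∉ Γ := by
  intro hdiff
  have hcover : Δ = ⋃ a ∈ Set.range α \ {α j}, ((a + ·) '' Γ) := by
    rw [hgen]
    refine subset_antisymm (Set.iUnion_subset fun k => ?_) ?_
    · rintro _ ⟨γ, hγ, rfl⟩
      simp only [Set.mem_iUnion, Set.mem_image, Set.mem_sdiff, Set.mem_range,
        Set.mem_singleton_iff, exists_prop]
      by_cases hk : α k = α j
      · exact ⟨α i, ⟨⟨i, rfl⟩, hlt.ne⟩, α j - α i + γ, hadd _ hdiff _ hγ, by omega⟩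
      · exact ⟨α k, ⟨⟨k, rfl⟩, hk⟩, γ, hγ, rfl⟩
    · exact Set.iUnion₂_subset fun a ⟨⟨k, hk⟩, _⟩ =>
        hk ▸ Set.subset_iUnion (fun k => (α k + ·) '' Γ) k
  have hj : α j ∈ Set.range α \ {α j} := by
    rw [hmin _ Set.sdiff_subset hcover]
    exact ⟨j, rfl⟩
  exact hj.2 rfl

noncomputable def minOrd {ι : Type*} (F : ι → PowerSeries ℂ) : ℕ :=
  sInf {m : ℕ | ∃ j, F j ≠ 0 ∧ m = ord (F j)}

section minOrd

variable {ι : Type*} {F : ι → PowerSeries ℂ}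

lemma minOrd_le {j : ι} (hj : F j ≠ 0) : minOrd F ≤ ord (F j) :=
  Nat.sInf_le ⟨j, hj, rfl⟩

lemma exists_ord_eq_minOrd {j : ι} (hj : F j ≠ 0) : ∃ k, F k ≠ 0 ∧ ord (F k) = minOrd F := by
  obtain ⟨k, hk, e⟩ :=
    Nat.sInf_mem (⟨_, j, hj, rfl⟩ : {m : ℕ | ∃ j, F j ≠ 0 ∧ m = ord (F j)}.Nonempty)
  exact ⟨k, hk, e.symm⟩

variable [Fintype ι]

lemma minOrd_lt_ord_sum (hsum : ∑ j, F j ≠ 0)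
    (hne : ∀ j, F j ≠ 0 → ord (F j) ≠ ord (∑ j, F j)) :
    minOrd F < ord (∑ j, F j) := by
  obtain ⟨j, -, hj⟩ := Finset.exists_ne_zero_of_sum_ne_zero
    (s := Finset.univ) (f := fun j => coeff (ord (∑ j, F j)) (F j))
    (by rw [← map_sum]; exact coeff_ord_ne_zero hsum)
  have hFj : F j ≠ 0 := by rintro h; simp [h] at hj
  obtain ⟨k, hk, hkord⟩ := exists_ord_eq_minOrd hFj
  exact lt_of_le_of_ne ((minOrd_le hFj).trans (ord_le_of_coeff_ne_zero hj)) (hkord ▸ hne k hk)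

lemma exists_lt_ord_eq_minOrd [LinearOrder ι] (hlt : minOrd F < ord (∑ j, F j)) :
    ∃ i j, i < j ∧ F i ≠ 0 ∧ F j ≠ 0 ∧ ord (F i) = minOrd F ∧ ord (F j) = minOrd F := by
  obtain ⟨j₀, hj₀⟩ : ∃ j, F j ≠ 0 := by
    by_contra! h
    simp [h, ord] at hlt
  obtain ⟨j, hj, hjord⟩ := exists_ord_eq_minOrd hj₀
  have hcoeff := coeff_of_lt_ord hlt
  obtain ⟨k, hkj, hk⟩ : ∃ k ≠ j, coeff (minOrd F) (F k) ≠ 0 := by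
    by_contra! h
    rw [map_sum, Finset.sum_eq_single j (fun k _ => h k) (by simp)] at hcoeff
    exact coeff_ord_ne_zero hj (hjord ▸ hcoeff)
  have hk0 : F k ≠ 0 := by rintro h; simp [h] at hk
  have hkord : ord (F k) = minOrd F := le_antisymm (ord_le_of_coeff_ne_zero hk) (minOrd_le hk0)
  rcases lt_or_gt_of_ne hkj with h | h
  · exact ⟨k, j, h, hk0, hj, hkord, hjord⟩
  · exact ⟨j, k, h, hj, hk0, hjord, hkord⟩

end minOrd

section semigroup

variable {Γ : Set ℕ}

lemma mem_semigroup_iff (hΓ : Γ = ({1, 2, 3, 5, 7, 9, 11, 15} : Set ℕ)ᶜ) (n : ℕ) :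
    n ∈ Γ ↔ ¬(n = 1 ∨ n = 2 ∨ n = 3 ∨ n = 5 ∨ n = 7 ∨ n = 9 ∨ n = 11 ∨ n = 15) := by
  subst hΓ
  simp

lemma add_mem_semigroup (hΓ : Γ = ({1, 2, 3, 5, 7, 9, 11, 15} : Set ℕ)ᶜ) {a b : ℕ}
    (ha : a ∈ Γ) (hb : b ∈ Γ) : a + b ∈ Γ := by
  rw [mem_semigroup_iff hΓ] at *
  omega

lemma le_and_eq_add_two_of_sub_notMem (hΓ : Γ = ({1, 2, 3, 5, 7, 9, 11, 15} : Set ℕ)ᶜ)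
    {m n : ℕ} (hm : m ∈ Γ) (hn : n ∈ Γ) (hgap : n - m ∉ Γ) : 6 ≤ n ∧ (n < 13 → n = m + 2) := by
  rw [mem_semigroup_iff hΓ] at hm hn hgap
  omega

lemma order_jump_arith (hΓ : Γ = ({1, 2, 3, 5, 7, 9, 11, 15} : Set ℕ)ᶜ) {Δ : Set ℕ}
    (hΔΓ : ∀ δ ∈ Δ, ∀ γ ∈ Γ, δ + γ ∈ Δ) (h0Δ : 0 ∈ Δ) {η a b o₁ o₂ : ℕ} (hηΔ : η ∉ Δ)
    (ha : a ∈ Δ) (hb : b ∈ Δ) (hba : b - a ∉ Γ) (hbΓ : b ∉ Γ)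
    (haΓ : a = 0 ∨ a ∉ Γ) (ho₁ : o₁ ∈ Γ) (ho₂ : o₂ ∈ Γ) (heq : a + o₁ = b + o₂)
    (hlt : a + o₁ < η) :
    η ∈ ({7, 9, 11, 15} : Set ℕ) ∧ 1 ∉ Δ ∧ 3 ∉ Δ ∧ a = 0 ∧ b = 2 := by
  have hnotMem : ∀ c ≤ η, η - c ∈ Γ → c ∉ Δ := fun c hc hγ hcΔ =>
    hηΔ (by simpa [hc] using hΔΓ c hcΔ _ hγ)
  have hηΓ : η ∉ Γ := fun h => hηΔ (by simpa using hΔΓ 0 h0Δ η h)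
  obtain ⟨h6, h13⟩ := le_and_eq_add_two_of_sub_notMem hΓ ho₂ ho₁
    (by rwa [show o₁ - o₂ = b - a by omega])
  rw [mem_semigroup_iff hΓ, not_not] at hηΓ hbΓ
  have hη : η = 7 ∨ η = 9 ∨ η = 11 ∨ η = 15 := by omega
  have h1 : 1 ∉ Δ := hnotMem 1 (by omega) (by rw [mem_semigroup_iff hΓ]; omega)
  have h3 : 3 ∉ Δ := hnotMem 3 (by omega) (by rw [mem_semigroup_iff hΓ]; omega)
  have hb13 : b ≠ 1 ∧ b ≠ 3 := ⟨fun h => h1 (h ▸ hb), fun h => h3 (h ▸ hb)⟩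
  have ha13 : a ≠ 1 ∧ a ≠ 3 := ⟨fun h => h1 (h ▸ ha), fun h => h3 (h ▸ ha)⟩
  have hη15 : η ≠ 15 := by
    rintro rfl
    exact hnotMem b (by omega) (by rw [mem_semigroup_iff hΓ]; omega) hb
  have hba2 : b = a + 2 := by omega
  rw [mem_semigroup_iff hΓ, not_not] at haΓ
  refine ⟨?_, h1, h3, by omega, by omega⟩
  simp only [Set.mem_insert_iff, Set.mem_singleton_iff]
  omega

end semigroup

lemma eq_one_of_eq_two {r : ℕ} {α : Fin (r + 1) → ℕ} (hmono : StrictMono α) (hα0 : α 0 = 0)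
    (h1 : ∀ k, α k ≠ 1) {j : Fin (r + 1)} (hj : α j = 2) :
    ∃ hr : 0 < r, j = ⟨1, Nat.succ_lt_succ hr⟩ := by
  have hj0 : (j : ℕ) ≠ 0 := fun h => by
    rw [show j = 0 from Fin.ext h] at hj
    omega
  have hr : 0 < r := by omega
  refine ⟨hr, hmono.injective ?_⟩
  have hlo : α 0 < α ⟨1, Nat.succ_lt_succ hr⟩ := hmono (by simp [Fin.lt_def])
  have hhi : α ⟨1, Nat.succ_lt_succ hr⟩ ≤ α j := hmono.monotone (Fin.le_def.2 (by simp; omega))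
  have := h1 ⟨1, Nat.succ_lt_succ hr⟩
  omega

/-- Lemma 6.1 of the paper, for `Γ = ⟨4,6,13⟩ = ℕ ∖ {1,2,3,5,7,9,11,15}` and
`O = ℂ[[t⁴, t⁶+t⁷]]`: if `Δ` is a `Γ`-module with minimal generators
`0 = α₀ < α₁ < ⋯ < α_r`, `f_j ∈ ℂ[[t]]` have orders `α_j`, `φ_j ∈ O`, and
`g = Σ f_j φ_j` is nonzero with `η = ord g ∉ Δ`, then `α₁ = 2`, `1, 3 ∉ Δ`,
`η ∈ {7,9,11,15}`, and `ord (f₀φ₀) = ord (f₁φ₁) = min_j ord (f_j φ_j)`. -/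
theorem order_jump_lemma
    (Γ : Set ℕ) (hΓ : Γ = ({1, 2, 3, 5, 7, 9, 11, 15} : Set ℕ)ᶜ)
    (Δ : Set ℕ) (h0Δ : 0 ∈ Δ) (hΔΓ : ∀ δ ∈ Δ, ∀ γ ∈ Γ, δ + γ ∈ Δ)
    (r : ℕ) (α : Fin (r + 1) → ℕ) (hmono : StrictMono α) (hα0 : α 0 = 0)
    (hαΔ : ∀ j, α j ∈ Δ)
    (hgen : Δ = ⋃ j, ((α j + ·) '' Γ))
    (hmin : ∀ s : Set ℕ, s ⊆ Set.range α →
      Δ = ⋃ a ∈ s, ((a + ·) '' Γ) → s = Set.range α)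
    (f : Fin (r + 1) → PowerSeries ℂ)
    (hf0 : ∀ j, f j ≠ 0) (hford : ∀ j, ord (f j) = α j)
    (phi : Fin (r + 1) → PowerSeries ℂ) (hphi : ∀ j, phi j ∈ Oimage)
    (hg : (∑ j, f j * phi j) ≠ 0)
    (η : ℕ) (hη : η = ord (∑ j, f j * phi j)) (hηΔ : η ∉ Δ) :
    ∃ hr : 0 < r,
      α ⟨1, Nat.succ_lt_succ hr⟩ = 2 ∧
      1 ∉ Δ ∧ 3 ∉ Δ ∧
      η ∈ ({7, 9, 11, 15} : Set ℕ) ∧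
      f 0 * phi 0 ≠ 0 ∧
      f ⟨1, Nat.succ_lt_succ hr⟩ * phi ⟨1, Nat.succ_lt_succ hr⟩ ≠ 0 ∧
      ord (f 0 * phi 0) =
        ord (f ⟨1, Nat.succ_lt_succ hr⟩ * phi ⟨1, Nat.succ_lt_succ hr⟩) ∧
      ord (f 0 * phi 0) =
        sInf {m : ℕ | ∃ j, f j * phi j ≠ 0 ∧ m = ord (f j * phi j)} := by
  set F := fun j => f j * phi j
  have hphi0 : ∀ j, F j ≠ 0 → phi j ≠ 0 := fun j => right_ne_zero_of_mul
  have hordF : ∀ j, F j ≠ 0 → ord (F j) = α j + ord (phi j) := fun j hj => by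
    rw [ord_mul (hf0 j) (hphi0 j hj), hford j]
  have hordΓ : ∀ j, F j ≠ 0 → ord (phi j) ∈ Γ := fun j hj =>
    hΓ ▸ ord_mem_of_mem_Oimage (hphi j) (hphi0 j hj)
  have hlt := minOrd_lt_ord_sum hg fun j hj e =>
    hηΔ (hη ▸ e ▸ hordF j hj ▸ hΔΓ _ (hαΔ j) _ (hordΓ j hj))
  obtain ⟨i, j, hij, hi, hj, hio, hjo⟩ := exists_lt_ord_eq_minOrd hlt
  have hgap : ∀ k l, α k < α l → α l - α k ∉ Γ := fun k l =>
    sub_notMem_of_minimal_generators (fun _ ha _ hb => add_mem_semigroup hΓ ha hb) hgen hmin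
  have hjΓ : α j ∉ Γ := by
    simpa [hα0] using hgap 0 j (hmono ((Fin.zero_le i).trans_lt hij))
  have hiΓ : α i = 0 ∨ α i ∉ Γ := by
    rcases eq_or_ne i 0 with rfl | hi0
    · exact Or.inl hα0
    · exact Or.inr (by simpa [hα0] using hgap 0 i (hmono (Fin.pos_iff_ne_zero.2 hi0)))
  obtain ⟨hηmem, h1, h3, hi0, hj2⟩ := order_jump_arith hΓ hΔΓ h0Δ hηΔ (hαΔ i) (hαΔ j)
    (hgap i j (hmono hij)) hjΓ hiΓ (hordΓ i hi) (hordΓ j hj)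
    (by rw [← hordF i hi, ← hordF j hj, hio, hjo]) (by rw [← hordF i hi, hio, hη]; exact hlt)
  obtain rfl : i = 0 := hmono.injective (hi0.trans hα0.symm)
  obtain ⟨hr, rfl⟩ := eq_one_of_eq_two hmono hα0 (fun k hk => h1 (hk ▸ hαΔ k)) hj2
  exact ⟨hr, hj2, h1, h3, hηmem, hi, hj, hio.trans hjo.symm, hio⟩
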